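/- arXiv:1301.4728 — 4 statements merged into one kernel-verified Lean document; each statement's English description precedes it below -/
import Mathlib

section
/- For any finite set of points in the Euclidean plane, there exists a Euclidean minimum spanning tree in which every vertex has degree at most 5. -/
noncomputable section
abbrev Pt := EuclideanSpace ℝ (Fin 2)

/-- Length of an edge (pair of vertices drawn from the finite point set `Y`). -/
def elen (Y : Finset Pt) : Sym2 ↥Y → ℝ :=
  Sym2.lift ⟨fun a b => dist (a : Pt) (b : Pt), fun _ _ => dist_comm _ _⟩

/-- Bottleneck (longest edge length) of a graph on the points `Y`. -/
def bneck (Y : Finset Pt) (G : SimpleGraph ↥Y) : ℝ :=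
  ⨆ e ∈ G.edgeSet, elen Y e

/-- Total edge length of a graph on the points `Y`. -/
def totalLen (Y : Finset Pt) (G : SimpleGraph ↥Y) : ℝ :=
  ∑ e ∈ (Set.toFinite G.edgeSet).toFinset, elen Y e

/-!
In a minimum spanning tree, two neighbours `u, u'` of a vertex `v` satisfy `|vu| ≤ |uu'|`, so
seen from `v` they are at angle at least `π / 3`. Among six such neighbours, some `u` lies below
`v` for a generic linear functional `f` (four directions pairwise `π / 3` apart do not fit in an
open half-plane), and some other `u'` forms an equilateral triangle with `v` and `u` (otherwise
five directions would fit in an open arc of length `4π / 3`). Exchanging the edge `vu'` for `uu'`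
gives a minimum spanning tree with a smaller value of `∑_{ab ∈ E} (f a + f b)`, so a minimum
spanning tree minimising this sum has maximum degree at most five.
-/

open Finset Real Complex ComplexConjugate
open scoped InnerProductSpace

theorem exists_card_sub_one_mul_le_sub {ι : Type*} {s : Finset ι} (hs : s.Nonempty)
    {φ : ι → ℝ} {d : ℝ} (hsep : (s : Set ι).Pairwise fun i j => d ≤ |φ i - φ j|) :
    ∃ i ∈ s, ∃ j ∈ s, (#s - 1 : ℝ) * d ≤ φ j - φ i := by
  classical
  induction s using Finset.induction_on_max_value φ with
  | empty => simp at hs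
  | insert a s has hmax ih =>
    rcases s.eq_empty_or_nonempty with rfl | hs'
    · exact ⟨a, mem_insert_self a ∅, a, mem_insert_self a ∅, by simp⟩
    obtain ⟨i, hi, j, hj, hij⟩ := ih hs' (hsep.mono (by simp))
    have hgap : d ≤ φ a - φ j := by
      have : d ≤ |φ a - φ j| :=
        hsep (mem_insert_self a s) (mem_insert_of_mem hj) (by rintro rfl; exact has hj)
      rwa [abs_of_nonneg (sub_nonneg.mpr (hmax j hj))] at this
    refine ⟨i, mem_insert_of_mem hi, a, mem_insert_self a s, ?_⟩
    rw [card_insert_of_notMem has]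
    push_cast
    linarith

theorem card_sub_one_mul_lt_of_forall_mem_Ioo {ι : Type*} {s : Finset ι} (hs : s.Nonempty)
    {φ : ι → ℝ} {a b d : ℝ} (hφ : ∀ i ∈ s, φ i ∈ Set.Ioo a b)
    (hsep : (s : Set ι).Pairwise fun i j => d ≤ |φ i - φ j|) :
    (#s - 1 : ℝ) * d < b - a := by
  obtain ⟨i, hi, j, hj, hij⟩ := exists_card_sub_one_mul_le_sub hs hsep
  linarith [(hφ i hi).1, (hφ j hj).2]

section InnerProductSpace

variable {F : Type*} [NormedAddCommGroup F] [InnerProductSpace ℝ F] {x y : F}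

theorem two_inner_le_norm_mul_norm_of_norm_le_dist (hx : ‖x‖ ≤ dist x y) (hy : ‖y‖ ≤ dist x y) :
    2 * ⟪x, y⟫_ℝ ≤ ‖x‖ * ‖y‖ := by
  have hcos := norm_sub_sq_real x y
  rw [← dist_eq_norm] at hcos
  rcases le_total ‖x‖ ‖y‖ with h | h <;> nlinarith [norm_nonneg x, norm_nonneg y]

theorem dist_eq_norm_of_norm_mul_norm_le_two_inner (hy0 : y ≠ 0)
    (hx : ‖x‖ ≤ dist x y) (hy : ‖y‖ ≤ dist x y) (h : ‖x‖ * ‖y‖ ≤ 2 * ⟪x, y⟫_ℝ) :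
    dist x y = ‖y‖ := by
  have hcos := norm_sub_sq_real x y
  rw [← dist_eq_norm] at hcos
  have hy0' := norm_pos_iff.mpr hy0
  have hx2 : ‖x‖ ^ 2 ≤ dist x y ^ 2 := pow_le_pow_left₀ (norm_nonneg x) hx 2
  have hxy : ‖x‖ ≤ ‖y‖ := by nlinarith
  have : dist x y ^ 2 ≤ ‖y‖ ^ 2 := by nlinarith [norm_nonneg x]
  nlinarith [dist_nonneg (x := x) (y := y)]

end InnerProductSpace

theorem Real.pi_div_three_le_abs_of_cos_le {x : ℝ} (h : cos x ≤ 1 / 2) : π / 3 ≤ |x| := by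
  by_contra! hx
  have := cos_lt_cos_of_nonneg_of_le_pi (abs_nonneg x) (by linarith [pi_pos]) hx
  rw [cos_abs, cos_pi_div_three] at this
  linarith

theorem Real.abs_lt_two_pi_div_three_of_neg_half_lt_cos {x : ℝ} (hx : |x| ≤ π)
    (h : -(1 / 2) < cos x) : |x| < 2 * π / 3 := by
  by_contra! hx'
  have := cos_le_cos_of_nonneg_of_le_pi (by linarith) (by linarith) (by linarith : π - |x| ≤ π / 3)
  rw [cos_pi_sub, cos_abs, cos_pi_div_three] at this
  linarith

theorem Complex.norm_mul_norm_mul_cos_arg_sub_arg (z w : ℂ) :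
    ‖z‖ * ‖w‖ * Real.cos (arg z - arg w) = ⟪z, w⟫_ℝ := by
  rw [Real.cos_sub, Complex.inner]
  simp only [mul_re, conj_re, conj_im]
  rw [← norm_mul_cos_arg z, ← norm_mul_sin_arg z, ← norm_mul_cos_arg w, ← norm_mul_sin_arg w]
  ring

theorem Complex.inner_mul_mul (m z w : ℂ) : ⟪m * z, m * w⟫_ℝ = ‖m‖ ^ 2 * ⟪z, w⟫_ℝ := by
  rw [Complex.inner, Complex.inner, map_mul,
    show m * w * (conj m * conj z) = (m * conj m) * (w * conj z) by ring, mul_conj,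
    normSq_eq_norm_sq, re_ofReal_mul]

theorem Complex.pi_div_three_le_abs_arg_mul_sub_arg_mul {m z w : ℂ} (hm : m ≠ 0) (hz : z ≠ 0)
    (hw : w ≠ 0) (h : 2 * ⟪z, w⟫_ℝ ≤ ‖z‖ * ‖w‖) : π / 3 ≤ |arg (m * z) - arg (m * w)| := by
  apply Real.pi_div_three_le_abs_of_cos_le
  have key := norm_mul_norm_mul_cos_arg_sub_arg (m * z) (m * w)
  rw [inner_mul_mul, norm_mul, norm_mul] at key
  have hpos : 0 < ‖m‖ ^ 2 * (‖z‖ * ‖w‖) := by positivity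
  refine le_of_mul_le_mul_left ?_ hpos
  nlinarith

section Configuration

variable {ι : Type*} {s : Finset ι} {z : ι → ℂ}

theorem Complex.exists_re_mul_nonpos (hs : 4 ≤ #s) (h0 : ∀ i ∈ s, z i ≠ 0)
    (hsep : (s : Set ι).Pairwise fun i j => 2 * ⟪z i, z j⟫_ℝ ≤ ‖z i‖ * ‖z j‖) {m : ℂ}
    (hm : m ≠ 0) : ∃ i ∈ s, (m * z i).re ≤ 0 := by
  by_contra! hpos
  have hspread := card_sub_one_mul_lt_of_forall_mem_Ioo (s := s) (card_pos.mp (by omega))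
    (φ := fun i => arg (m * z i)) (a := -(π / 2)) (b := π / 2) (d := π / 3)
    (fun i hi => abs_lt.mp (abs_arg_lt_pi_div_two_iff.mpr (Or.inl (hpos i hi))))
    (fun i hi j hj hne => pi_div_three_le_abs_arg_mul_sub_arg_mul hm (h0 i hi) (h0 j hj)
      (hsep hi hj hne))
  have : (4 : ℝ) ≤ #s := by exact_mod_cast hs
  nlinarith [pi_pos]

theorem Complex.exists_norm_mul_norm_le_two_inner (hs : 6 ≤ #s) (h0 : ∀ i ∈ s, z i ≠ 0)
    (hsep : (s : Set ι).Pairwise fun i j => 2 * ⟪z i, z j⟫_ℝ ≤ ‖z i‖ * ‖z j‖) {i : ι}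
    (hi : i ∈ s) : ∃ j ∈ s, j ≠ i ∧ ‖z i‖ * ‖z j‖ ≤ 2 * ⟪z i, z j⟫_ℝ := by
  classical
  by_contra! hlt
  have hm : -conj (z i) ≠ 0 := neg_ne_zero.mpr ((map_ne_zero _).mpr (h0 i hi))
  have hcard : #(s.erase i) = #s - 1 := card_erase_of_mem hi
  have hspread := card_sub_one_mul_lt_of_forall_mem_Ioo (s := s.erase i) (card_pos.mp (by omega))
    (φ := fun j => arg (-conj (z i) * z j)) (a := -(2 * π / 3)) (b := 2 * π / 3) (d := π / 3) ?_
    (fun j hj k hk hne => pi_div_three_le_abs_arg_mul_sub_arg_mul hm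
      (h0 j (mem_of_mem_erase hj)) (h0 k (mem_of_mem_erase hk))
      (hsep (mem_of_mem_erase hj) (mem_of_mem_erase hk) hne))
  · have : (5 : ℝ) ≤ #(s.erase i) := by exact_mod_cast (by omega : 5 ≤ #(s.erase i))
    nlinarith [pi_pos]
  · -- multiplying by `-conj (z i)` turns `z i` to the negative real axis, so the points at angle
    -- more than `π / 3` from it get arguments in `(-2π / 3, 2π / 3)`
    intro j hj
    obtain ⟨hji, hjs⟩ := mem_erase.mp hj
    have hmj : -conj (z i) * z j ≠ 0 := mul_ne_zero hm (h0 j hjs)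
    refine abs_lt.mp (abs_lt_two_pi_div_three_of_neg_half_lt_cos (abs_arg_le_pi _) ?_)
    rw [cos_arg hmj, lt_div_iff₀ (norm_pos_iff.mpr hmj), norm_mul, norm_neg, norm_conj]
    have hre : (-conj (z i) * z j).re = -⟪z i, z j⟫_ℝ := by simp [Complex.inner, mul_comm]
    linarith [hlt j hjs hji]

theorem Complex.exists_re_mul_le_and_dist_eq {p : ι → ℂ} {v m : ℂ} (hs : 6 ≤ #s)
    (hv : ∀ i ∈ s, p i ≠ v) (hsep : (s : Set ι).Pairwise fun i j => dist v (p i) ≤ dist (p i) (p j))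
    (hm : m ≠ 0) :
    ∃ i ∈ s, (m * p i).re ≤ (m * v).re ∧ ∃ j ∈ s, j ≠ i ∧ dist (p i) (p j) = dist v (p j) := by
  have h0 : ∀ i ∈ s, p i - v ≠ 0 := fun i hi => sub_ne_zero.mpr (hv i hi)
  have hnorm : ∀ i, ‖p i - v‖ = dist v (p i) := fun i => by rw [dist_comm, dist_eq_norm]
  have hdist : ∀ i j, dist (p i - v) (p j - v) = dist (p i) (p j) := fun i j => dist_sub_right _ _ _
  have hsep' : (s : Set ι).Pairwise fun i j => 2 * ⟪p i - v, p j - v⟫_ℝ ≤ ‖p i - v‖ * ‖p j - v‖ :=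
    fun i hi j hj hne => two_inner_le_norm_mul_norm_of_norm_le_dist
      (by rw [hnorm, hdist]; exact hsep hi hj hne)
      (by rw [hnorm, hdist, dist_comm (p i)]; exact hsep hj hi hne.symm)
  obtain ⟨i, hi, hre⟩ := exists_re_mul_nonpos (by omega) h0 hsep' hm
  obtain ⟨j, hj, hji, hinner⟩ := exists_norm_mul_norm_le_two_inner hs h0 hsep' hi
  refine ⟨i, hi, ?_, j, hj, hji, ?_⟩
  · rw [mul_sub, sub_re] at hre
    linarith
  · rw [← hdist, ← hnorm]
    exact dist_eq_norm_of_norm_mul_norm_le_two_inner (h0 j hj)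
      (by rw [hnorm, hdist]; exact hsep hi hj hji.symm)
      (by rw [hnorm, hdist, dist_comm (p i)]; exact hsep hj hi hji) hinner

end Configuration

namespace SimpleGraph

variable {V : Type*}

theorem IsAcyclic.not_adj_of_adj_of_adj {T : SimpleGraph V} (hT : T.IsAcyclic) {u v w : V}
    (hvw : T.Adj v w) (hvu : T.Adj v u) : ¬T.Adj u w := by
  intro huw
  have hbridge := isBridge_iff.mp (isAcyclic_iff_forall_adj_isBridge.mp hT hvw)
  have hvu' : (T.deleteEdges {s(v, w)}).Adj v u := by
    simp [hvu, huw.ne, hvw.ne]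
  have huw' : (T.deleteEdges {s(v, w)}).Adj u w := by
    simp [huw, hvu.ne', huw.ne]
  exact hbridge (hvu'.reachable.trans huw'.reachable)

theorem Connected.of_forall_adj_reachable {G H : SimpleGraph V} (hG : G.Connected)
    (h : ∀ ⦃a b⦄, G.Adj a b → H.Reachable a b) : H.Connected := by
  have := hG.nonempty
  refine Connected.mk fun a b => (reachable_iff_reflTransGen a b).mpr ?_
  exact Relation.ReflTransGen.lift' id (fun x y hxy => (reachable_iff_reflTransGen x y).mp (h hxy))
    a b ((reachable_iff_reflTransGen a b).mp (hG.preconnected a b))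

variable {T : SimpleGraph V} {u v w : V}

theorem edgeSet_deleteEdges_sup_edge (huw : u ≠ w) :
    (T.deleteEdges {s(v, w)} ⊔ edge u w).edgeSet = insert s(u, w) (T.edgeSet \ {s(v, w)}) := by
  rw [edgeSet_sup, edgeSet_deleteEdges, edgeSet_edge_of_ne huw, Set.union_singleton]

theorem IsTree.deleteEdges_sup_edge [Finite V] (hT : T.IsTree) (hvw : T.Adj v w)
    (hvu : T.Adj v u) (huw : u ≠ w) : (T.deleteEdges {s(v, w)} ⊔ edge u w).IsTree := by
  have hcard := (isTree_iff_connected_and_card.mp hT).2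
  rw [isTree_iff_connected_and_card]
  refine ⟨hT.connected.of_forall_adj_reachable fun a b hab => ?_, ?_⟩
  · have hvu' : (T.deleteEdges {s(v, w)} ⊔ edge u w).Adj v u := by
      simp [hvu, huw, hvw.ne]
    have huw' : (T.deleteEdges {s(v, w)} ⊔ edge u w).Adj u w := by
      simp [edge_adj, huw]
    by_cases he : s(a, b) = s(v, w)
    · rcases Sym2.eq_iff.mp he with ⟨rfl, rfl⟩ | ⟨rfl, rfl⟩
      · exact hvu'.reachable.trans huw'.reachable
      · exact (hvu'.reachable.trans huw'.reachable).symm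
    · exact Adj.reachable (Or.inl (by simp [hab, he]))
  · have hnotMem : s(u, w) ∉ T.edgeSet \ {s(v, w)} := fun h =>
      hT.isAcyclic.not_adj_of_adj_of_adj hvw hvu h.1
    rw [Nat.card_coe_set_eq, edgeSet_deleteEdges_sup_edge huw, Set.ncard_insert_of_notMem hnotMem,
      Set.ncard_sdiff_singleton_add_one (show s(v, w) ∈ T.edgeSet from hvw),
      ← Nat.card_coe_set_eq, hcard]

def edgeSum [Finite V] (G : SimpleGraph V) (g : Sym2 V → ℝ) : ℝ :=
  ∑ e ∈ (Set.toFinite G.edgeSet).toFinset, g e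

theorem edgeSum_deleteEdges_sup_edge [Finite V] (g : Sym2 V → ℝ) (hvw : T.Adj v w)
    (huw : ¬T.Adj u w) (hne : u ≠ w) :
    (T.deleteEdges {s(v, w)} ⊔ edge u w).edgeSum g = T.edgeSum g - g s(v, w) + g s(u, w) := by
  classical
  have hfin : (Set.toFinite (T.deleteEdges {s(v, w)} ⊔ edge u w).edgeSet).toFinset =
      insert s(u, w) ((Set.toFinite T.edgeSet).toFinset.erase s(v, w)) := by
    ext e
    simp [edgeSet_deleteEdges_sup_edge hne, and_comm]
  rw [edgeSum, edgeSum, hfin, Finset.sum_insert (by simp [huw]),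
    Finset.sum_erase_eq_sub (by simpa using hvw)]
  ring

def IsMinSpanningTree [Finite V] (ℓ : Sym2 V → ℝ) (T : SimpleGraph V) : Prop :=
  T.IsTree ∧ ∀ G : SimpleGraph V, G.IsTree → T.edgeSum ℓ ≤ G.edgeSum ℓ

theorem exists_isMinSpanningTree_forall_edgeSum_le [Finite V] [Nonempty V]
    (ℓ g : Sym2 V → ℝ) : ∃ T : SimpleGraph V, T.IsMinSpanningTree ℓ ∧
      ∀ T' : SimpleGraph V, T'.IsMinSpanningTree ℓ → T.edgeSum g ≤ T'.edgeSum g := by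
  have := Fintype.ofFinite V
  classical
  obtain ⟨T₀, -, hT₀⟩ := (connected_top (V := V)).exists_isTree_le
  have : Nonempty {T : SimpleGraph V // T.IsTree} := ⟨⟨T₀, hT₀⟩⟩
  obtain ⟨⟨T₁, hT₁⟩, hmin₁⟩ := Finite.exists_min fun T : {T : SimpleGraph V // T.IsTree} =>
    T.1.edgeSum ℓ
  have : Nonempty {T : SimpleGraph V // T.IsMinSpanningTree ℓ} :=
    ⟨⟨T₁, hT₁, fun G hG => hmin₁ ⟨G, hG⟩⟩⟩
  obtain ⟨⟨T, hT⟩, hmin⟩ :=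
    Finite.exists_min fun T : {T : SimpleGraph V // T.IsMinSpanningTree ℓ} => T.1.edgeSum g
  exact ⟨T, hT, fun T' hT' => hmin ⟨T', hT'⟩⟩

namespace IsMinSpanningTree

variable [Finite V] {ℓ : Sym2 V → ℝ}

theorem le_of_adj_of_adj (hT : T.IsMinSpanningTree ℓ) (hvw : T.Adj v w) (hvu : T.Adj v u)
    (huw : u ≠ w) : ℓ s(v, w) ≤ ℓ s(u, w) := by
  have := hT.2 _ (hT.1.deleteEdges_sup_edge hvw hvu huw)
  rw [edgeSum_deleteEdges_sup_edge ℓ hvw (hT.1.isAcyclic.not_adj_of_adj_of_adj hvw hvu) huw] at this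
  linarith

theorem le_of_forall_edgeSum_le (hT : T.IsMinSpanningTree ℓ) {g : Sym2 V → ℝ}
    (hmin : ∀ T' : SimpleGraph V, T'.IsMinSpanningTree ℓ → T.edgeSum g ≤ T'.edgeSum g)
    (hvw : T.Adj v w) (hvu : T.Adj v u) (huw : u ≠ w) (hℓ : ℓ s(u, w) = ℓ s(v, w)) :
    g s(v, w) ≤ g s(u, w) := by
  have hnadj := hT.1.isAcyclic.not_adj_of_adj_of_adj hvw hvu
  have hT' : (T.deleteEdges {s(v, w)} ⊔ edge u w).IsMinSpanningTree ℓ := by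
    refine ⟨hT.1.deleteEdges_sup_edge hvw hvu huw, fun G hG => ?_⟩
    rw [edgeSum_deleteEdges_sup_edge ℓ hvw hnadj huw, hℓ, sub_add_cancel]
    exact hT.2 G hG
  have := hmin _ hT'
  rw [edgeSum_deleteEdges_sup_edge g hvw hnadj huw] at this
  linarith

end IsMinSpanningTree

end SimpleGraph

def endpointSum {V : Type*} (f : V → ℝ) : Sym2 V → ℝ :=
  Sym2.lift ⟨fun a b => f a + f b, fun _ _ => add_comm _ _⟩

theorem Complex.exists_ne_zero_injOn_re_mul (S : Finset ℂ) :
    ∃ m : ℂ, m ≠ 0 ∧ Set.InjOn (fun z => (m * z).re) S := by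
  obtain ⟨c, hc⟩ := Infinite.exists_notMem_finset
    ((S ×ˢ S).image fun zw => (zw.1.re - zw.2.re) / (zw.2.im - zw.1.im))
  refine ⟨1 - c * I, fun h => by simpa using congrArg re h, fun z hz w hw hzw => ?_⟩
  have hre : ∀ x : ℂ, ((1 - c * I) * x).re = x.re + c * x.im := fun x => by simp
  simp only [hre] at hzw
  by_contra hne
  by_cases him : z.im = w.im
  · exact hne (Complex.ext (by rw [him] at hzw; linarith) him)
  · refine hc (mem_image.mpr ⟨(z, w), mem_product.mpr ⟨hz, hw⟩, ?_⟩)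
    have : w.im - z.im ≠ 0 := sub_ne_zero.mpr (Ne.symm him)
    field_simp
    linarith

theorem ncard_neighborSet_le_five {X : Finset Pt} {e : Pt → ℂ} (he : Isometry e) {m : ℂ}
    (hm : m ≠ 0) (hinj : Set.InjOn (fun p => (m * e p).re) X) {T : SimpleGraph X}
    (hT : T.IsMinSpanningTree (elen X))
    (hmin : ∀ T' : SimpleGraph X, T'.IsMinSpanningTree (elen X) →
      T.edgeSum (endpointSum fun p => (m * e p).re) ≤
        T'.edgeSum (endpointSum fun p => (m * e p).re))
    (v : X) : (T.neighborSet v).ncard ≤ 5 := by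
  by_contra! hdeg
  set s := (Set.toFinite (T.neighborSet v)).toFinset
  have hs : 6 ≤ #s := by rwa [Set.ncard_eq_toFinset_card _ (Set.toFinite _)] at hdeg
  have hadj : ∀ u ∈ s, T.Adj v u := fun u hu => by simpa [s] using hu
  obtain ⟨u, hu, hfu, w, hw, hwu, hdist⟩ := Complex.exists_re_mul_le_and_dist_eq
    (p := fun u : X => e u) (v := e v) hs
    (fun u hu h => (hadj u hu).ne' (Subtype.ext (he.injective h)))
    (fun a ha b hb hab => by
      simpa [elen, he.dist_eq, dist_comm] using
        hT.le_of_adj_of_adj (hadj a ha) (hadj b hb) hab.symm)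
    hm
  have hlt : (m * e u).re < (m * e v).re :=
    hfu.lt_of_ne fun h => (hadj u hu).ne' (Subtype.ext (hinj u.2 v.2 h))
  have := hT.le_of_forall_edgeSum_le hmin (hadj w hw) (hadj u hu) hwu.symm
    (by simpa [elen, he.dist_eq] using hdist)
  simp only [endpointSum, Sym2.lift_mk] at this
  linarith

/-- every finite planar point set has a Euclidean MST of maximum degree at most 5. -/
theorem exists_euclidean_mst_maxDegree_le_five (X : Finset Pt) (hX : X.Nonempty) :
    ∃ T : SimpleGraph ↥X, T.IsTree ∧
      (∀ G : SimpleGraph ↥X, G.IsTree → totalLen X T ≤ totalLen X G) ∧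
      ∀ v : ↥X, (T.neighborSet v).ncard ≤ 5 := by
  have : Nonempty X := hX.to_subtype
  let e := Complex.orthonormalBasisOneI.repr.symm
  obtain ⟨m, hm, hinj⟩ := Complex.exists_ne_zero_injOn_re_mul (X.image e)
  obtain ⟨T, hT, hmin⟩ := SimpleGraph.exists_isMinSpanningTree_forall_edgeSum_le (elen X)
    (endpointSum fun p : X => (m * e p).re)
  exact ⟨T, hT.1, hT.2, ncard_neighborSet_le_five e.isometry hm
    (fun p hp q hq h => e.injective (hinj (mem_image_of_mem e hp) (mem_image_of_mem e hq) h))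
    hT hmin⟩
end
end

section
/- With positive edge lengths L_1,…,L_m and a budget of k beads, the optimal bottleneck value B(k) = min{ max_i L_i/(n_i+1) : n_i ∈ ℕ, Σ n_i = k } satisfies k · B(k) → L = Σ_i L_i as k → ∞. -/
open Filter

noncomputable section

/-- the optimal beading bottleneck B(k) satisfies k·B(k) → Σ L_i as k → ∞. -/
theorem beading_bottleneck_asymptotics (m : ℕ) (hm : 0 < m) (L : Fin m → ℝ)
    (hL : ∀ i, 0 < L i) (B : ℕ → ℝ)
    (hB : ∀ k, B k = sInf {c : ℝ | ∃ n : Fin m → ℕ,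
      (∑ i, n i) = k ∧ c = ⨆ i : Fin m, L i / ((n i : ℝ) + 1)}) :
    Tendsto (fun k : ℕ => (k : ℝ) * B k) atTop (nhds (∑ i, L i)) := by
  haveI : Nonempty (Fin m) := ⟨⟨0, hm⟩⟩
  set T : ℝ := ∑ i, L i with hTdef
  have hT : 0 < T := Finset.sum_pos (fun i _ => hL i) Finset.univ_nonempty
  set S : ℕ → Set ℝ := fun k => {c : ℝ | ∃ n : Fin m → ℕ,
      (∑ i, n i) = k ∧ c = ⨆ i : Fin m, L i / ((n i : ℝ) + 1)} with hSdef
  -- every element of S k is ≥ T / (k + m)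
  have hlow : ∀ k : ℕ, ∀ c ∈ S k, T / ((k : ℝ) + m) ≤ c := by
    intro k c hc
    obtain ⟨n, hn, rfl⟩ := hc
    set c := ⨆ i : Fin m, L i / ((n i : ℝ) + 1) with hcdef
    have hbdd : BddAbove (Set.range fun i : Fin m => L i / ((n i : ℝ) + 1)) :=
      (Set.finite_range _).bddAbove
    have hle : ∀ i, L i / ((n i : ℝ) + 1) ≤ c := fun i => le_ciSup hbdd i
    have hden : ∀ i : Fin m, (0 : ℝ) < (n i : ℝ) + 1 := fun i => by positivity
    have hsum : T ≤ ((k : ℝ) + m) * c := by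
      have h1 : ∀ i : Fin m, L i ≤ ((n i : ℝ) + 1) * c := by
        intro i
        have := mul_le_mul_of_nonneg_left (hle i) (le_of_lt (hden i))
        rwa [mul_div_cancel₀ _ (ne_of_gt (hden i))] at this
      calc T = ∑ i, L i := rfl
        _ ≤ ∑ i, ((n i : ℝ) + 1) * c := Finset.sum_le_sum (fun i _ => h1 i)
        _ = (∑ i, ((n i : ℝ) + 1)) * c := (Finset.sum_mul ..).symm
        _ = ((k : ℝ) + m) * c := by
            congr 1
            rw [Finset.sum_add_distrib]
            push_cast [← hn]
            simp
    have hkm : (0 : ℝ) < (k : ℝ) + m := by positivity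
    rw [div_le_iff₀ hkm]
    linarith [hsum]
  -- S k is nonempty
  have hne : ∀ k : ℕ, (S k).Nonempty := by
    intro k
    refine ⟨_, Pi.single (⟨0, hm⟩ : Fin m) k, ?_, rfl⟩
    simp [Finset.sum_pi_single']
  have hbddS : ∀ k : ℕ, BddBelow (S k) := fun k => ⟨_, fun c hc => hlow k c hc⟩
  -- lower bound for B k
  have hBlow : ∀ k : ℕ, T / ((k : ℝ) + m) ≤ B k := by
    intro k
    rw [hB k]
    exact le_csInf (hne k) (hlow k)
  -- upper bound: for k ≥ 1, B k ≤ T / k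
  have hBup : ∀ k : ℕ, 1 ≤ k → B k ≤ T / k := by
    intro k hk
    have hkpos : (0 : ℝ) < (k : ℝ) := by exact_mod_cast hk
    set n : Fin m → ℕ := fun i => ⌊(k : ℝ) * L i / T⌋₊ with hndef
    have hs : (∑ i, n i) ≤ k := by
      have h1 : ((∑ i, n i : ℕ) : ℝ) ≤ (k : ℝ) := by
        push_cast
        calc (∑ i, (n i : ℝ)) ≤ ∑ i, (k : ℝ) * L i / T :=
              Finset.sum_le_sum (fun i _ => Nat.floor_le (div_nonneg (mul_nonneg (Nat.cast_nonneg _) (hL i).le) hT.le))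
          _ = (k : ℝ) * T / T := by rw [← Finset.sum_div, ← Finset.mul_sum]
          _ = (k : ℝ) := by field_simp
      exact_mod_cast h1
    set i0 : Fin m := ⟨0, hm⟩ with hi0
    set n' : Fin m → ℕ := fun i => n i + (if i = i0 then k - ∑ j, n j else 0) with hn'def
    have hsum' : (∑ i, n' i) = k := by
      rw [hn'def]
      rw [Finset.sum_add_distrib]
      rw [Finset.sum_ite_eq' Finset.univ i0 (fun _ => k - ∑ j, n j)]
      simp [Nat.add_sub_cancel' hs]
    have hmem : (⨆ i : Fin m, L i / ((n' i : ℝ) + 1)) ∈ S k := ⟨n', hsum', rfl⟩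
    have hbound : (⨆ i : Fin m, L i / ((n' i : ℝ) + 1)) ≤ T / k := by
      apply ciSup_le
      intro i
      have hfl : (k : ℝ) * L i / T < (n i : ℝ) + 1 := Nat.lt_floor_add_one _
      have hni : (n i : ℝ) + 1 ≤ (n' i : ℝ) + 1 := by
        have : n i ≤ n' i := Nat.le_add_right _ _
        exact_mod_cast Nat.succ_le_succ this
      have hden : (0 : ℝ) < (n' i : ℝ) + 1 := by positivity
      rw [div_le_div_iff₀ hden hkpos]
      have : (k : ℝ) * L i < ((n i : ℝ) + 1) * T := (div_lt_iff₀ hT).mp hfl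
      nlinarith [hL i, hT]
    rw [hB k]
    exact le_trans (csInf_le (hbddS k) hmem) hbound
  -- squeeze
  have hTl : Tendsto (fun k : ℕ => T * ((k : ℝ) / ((k : ℝ) + m))) atTop (nhds T) := by
    have h0 : Tendsto (fun k : ℕ => (m : ℝ) / ((k : ℝ) + m)) atTop (nhds 0) :=
      Tendsto.div_atTop tendsto_const_nhds
        (tendsto_atTop_add_const_right _ _ tendsto_natCast_atTop_atTop)
    have h1 : Tendsto (fun k : ℕ => (k : ℝ) / ((k : ℝ) + m)) atTop (nhds 1) := by
      have heq : ∀ k : ℕ, (k : ℝ) / ((k : ℝ) + m) = 1 - (m : ℝ) / ((k : ℝ) + m) := by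
        intro k
        have hkm : (0 : ℝ) < (k : ℝ) + m := by
          have : (0 : ℝ) < (m : ℝ) := by exact_mod_cast hm
          positivity
        field_simp
        ring
      simpa [heq] using (tendsto_const_nhds.sub h0 :
        Tendsto (fun k : ℕ => (1 : ℝ) - (m : ℝ) / ((k : ℝ) + m)) atTop (nhds (1 - 0)))
    simpa using (h1.const_mul T)
  refine tendsto_of_tendsto_of_tendsto_of_le_of_le hTl tendsto_const_nhds ?_ ?_
  · intro k
    have h := hBlow k
    have hk0 : (0 : ℝ) ≤ (k : ℝ) := Nat.cast_nonneg k
    have := mul_le_mul_of_nonneg_left h hk0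
    calc T * ((k : ℝ) / ((k : ℝ) + m)) = (k : ℝ) * (T / ((k : ℝ) + m)) := by ring
      _ ≤ (k : ℝ) * B k := this
  · intro k
    rcases Nat.eq_zero_or_pos k with rfl | hk
    · simp [le_of_lt hT]
    · have h := hBup k hk
      have hkpos : (0 : ℝ) < (k : ℝ) := by exact_mod_cast hk
      calc (k : ℝ) * B k ≤ (k : ℝ) * (T / k) :=
            mul_le_mul_of_nonneg_left h (le_of_lt hkpos)
        _ = T := by field_simp
end
end

section
/- For positive reals L_1,…,L_m and any k ∈ ℕ, the optimal beading bottleneck satisfies (Σ L_i)/(k+m) ≤ B(k) ≤ max_i L_i/(⌊k·L_i/Σ L_j⌋+1), and in particular B(k) ≥ (Σ L_i)/(k+m). -/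
noncomputable section

/-- bounds on the optimal beading bottleneck:
(Σ L_i)/(k+m) ≤ B(k) ≤ max_i L_i/(⌊k·L_i/Σ L_j⌋+1). -/
theorem beading_bottleneck_bounds (m : ℕ) (hm : 0 < m) (L : Fin m → ℝ)
    (hL : ∀ i, 0 < L i) (k : ℕ) (B : ℕ → ℝ)
    (hB : ∀ k, B k = sInf {c : ℝ | ∃ n : Fin m → ℕ,
      (∑ i, n i) ≤ k ∧ c = ⨆ i : Fin m, L i / ((n i : ℝ) + 1)}) :
    (∑ i, L i) / ((k : ℝ) + m) ≤ B k ∧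
    B k ≤ ⨆ i : Fin m, L i / ((⌊(k : ℝ) * L i / ∑ j, L j⌋₊ : ℝ) + 1) := by
  have hi0 : Fin m := ⟨0, hm⟩
  have hS : 0 < ∑ j, L j := Finset.sum_pos (fun i _ => hL i) ⟨hi0, Finset.mem_univ _⟩
  have hkm : (0:ℝ) < (k:ℝ) + m := by
    have : (0:ℝ) < (m:ℝ) := by exact_mod_cast hm
    positivity
  -- key: every feasible value is at least the lower bound
  have key : ∀ n : Fin m → ℕ, (∑ i, n i) ≤ k →
      (∑ i, L i) / ((k:ℝ) + m) ≤ ⨆ i, L i / ((n i : ℝ) + 1) := by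
    intro n hn
    set c := ⨆ i, L i / ((n i : ℝ) + 1) with hc
    have hle : ∀ i, L i / ((n i : ℝ) + 1) ≤ c := fun i =>
      le_ciSup (Set.Finite.bddAbove (Set.finite_range (fun i => L i / ((n i : ℝ) + 1)))) i
    have hc0 : 0 < c :=
      lt_of_lt_of_le (by have := hL hi0; positivity) (hle hi0)
    rw [div_le_iff₀ hkm]
    calc ∑ i, L i ≤ ∑ i, ((n i : ℝ) + 1) * c := by
          refine Finset.sum_le_sum fun i _ => ?_
          have := hle i
          rw [div_le_iff₀ (by positivity)] at this
          linarith [this]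
      _ = (∑ i, ((n i : ℝ) + 1)) * c := (Finset.sum_mul ..).symm
      _ = ((∑ i, (n i : ℝ)) + m) * c := by
          rw [Finset.sum_add_distrib]; simp
      _ ≤ ((k:ℝ) + m) * c := by
          apply mul_le_mul_of_nonneg_right _ hc0.le
          have : (∑ i, (n i : ℝ)) ≤ (k:ℝ) := by exact_mod_cast hn
          linarith
      _ = c * ((k:ℝ) + m) := mul_comm _ _
  set S : Set ℝ := {c : ℝ | ∃ n : Fin m → ℕ,
      (∑ i, n i) ≤ k ∧ c = ⨆ i : Fin m, L i / ((n i : ℝ) + 1)} with hSdef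
  have hbdd : BddBelow S := ⟨(∑ i, L i) / ((k:ℝ) + m), by
    rintro c ⟨n, hn, rfl⟩; exact key n hn⟩
  -- membership of the floor assignment
  have hmem : (⨆ i : Fin m, L i / ((⌊(k : ℝ) * L i / ∑ j, L j⌋₊ : ℝ) + 1)) ∈ S := by
    refine ⟨fun i => ⌊(k : ℝ) * L i / ∑ j, L j⌋₊, ?_, rfl⟩
    have h1 : ((∑ i, ⌊(k : ℝ) * L i / ∑ j, L j⌋₊ : ℕ) : ℝ) ≤ (k:ℝ) := by
      push_cast
      calc (∑ i, (⌊(k : ℝ) * L i / ∑ j, L j⌋₊ : ℝ))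
          ≤ ∑ i, (k : ℝ) * L i / ∑ j, L j :=
            Finset.sum_le_sum fun i _ => Nat.floor_le (div_nonneg (mul_nonneg (Nat.cast_nonneg k) (hL i).le) hS.le)
        _ = (k:ℝ) := by
            rw [← Finset.sum_div, ← Finset.mul_sum]
            field_simp
    exact_mod_cast h1
  constructor
  · rw [hB k]
    exact le_csInf ⟨_, hmem⟩ (by rintro c ⟨n, hn, rfl⟩; exact key n hn)
  · rw [hB k]
    exact csInf_le hbdd hmem
end
end

section
/- As k → ∞, k · ℓ_MSTH^k(X) → L_MST(X), where ℓ_MSTH^k(X) is the minimal bottleneck over all distributions of k beads on the edges of a minimum spanning tree of X, and L_MST(X) is the total length of that MST. -/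
noncomputable section
/-!
Placing `n e` beads on an edge of length `w e` leaves gaps of length `w e / (n e + 1)`. If the
longest gap is `B`, then `w e ≤ B (n e + 1)` for every edge, and summing over the `m` edges gives
`L ≤ B (k + m)`. Conversely, giving each edge `⌊k w e / L⌋` beads, and the few beads left over to
any edge, makes every gap at most `L / k`. Hence `k L / (k + m) ≤ k ℓ_k ≤ L`.
-/

open Filter Topology

namespace Beading

variable {ι : Type*} (E : Finset ι) (hE : E.Nonempty) (w : ι → ℝ)

def bottleneck (n : ι → ℕ) : ℝ :=
  E.sup' hE fun e => w e / ((n e : ℝ) + 1)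

def optBottleneck (k : ℕ) : ℝ :=
  sInf {c : ℝ | ∃ n : ι → ℕ, (∑ e ∈ E, n e) = k ∧ c = bottleneck E hE w n}

variable {E w}

theorem sum_le_bottleneck_mul (n : ι → ℕ) :
    ∑ e ∈ E, w e ≤ bottleneck E hE w n * ((∑ e ∈ E, n e : ℕ) + E.card) := by
  have hgap : ∀ e ∈ E, w e ≤ bottleneck E hE w n * ((n e : ℝ) + 1) := fun e he =>
    (div_le_iff₀ (by positivity)).mp (Finset.le_sup' (fun e => w e / ((n e : ℝ) + 1)) he)
  calc ∑ e ∈ E, w e ≤ ∑ e ∈ E, bottleneck E hE w n * ((n e : ℝ) + 1) := Finset.sum_le_sum hgap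
    _ = bottleneck E hE w n * ((∑ e ∈ E, n e : ℕ) + E.card) := by
      rw [← Finset.mul_sum, Finset.sum_add_distrib, Finset.sum_const, nsmul_one, Nat.cast_sum]

theorem sum_div_le_bottleneck {k : ℕ} {n : ι → ℕ} (hn : ∑ e ∈ E, n e = k) :
    (∑ e ∈ E, w e) / (k + E.card) ≤ bottleneck E hE w n := by
  have hpos : (0 : ℝ) < k + E.card :=
    add_pos_of_nonneg_of_pos k.cast_nonneg (by exact_mod_cast hE.card_pos)
  rw [div_le_iff₀ hpos, ← hn]
  exact sum_le_bottleneck_mul hE n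

include hE in
theorem exists_le_sum_eq [DecidableEq ι] {b : ι → ℕ} {k : ℕ} (hb : ∑ e ∈ E, b e ≤ k) :
    ∃ n : ι → ℕ, b ≤ n ∧ ∑ e ∈ E, n e = k := by
  obtain ⟨e₀, he₀⟩ := hE
  refine ⟨b + Pi.single e₀ (k - ∑ e ∈ E, b e), le_self_add, ?_⟩
  simp only [Pi.add_apply, Finset.sum_add_distrib, Finset.sum_pi_single', if_pos he₀]
  omega

theorem sum_floor_mul_div_le (hw : ∀ e ∈ E, 0 ≤ w e) (k : ℕ) :
    ∑ e ∈ E, ⌊k * w e / ∑ e ∈ E, w e⌋₊ ≤ k := by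
  rcases (Finset.sum_nonneg hw).eq_or_lt with hL | hL
  · simp [← hL]
  set L := ∑ e ∈ E, w e
  have : (∑ e ∈ E, ⌊k * w e / L⌋₊ : ℝ) ≤ k :=
    calc (∑ e ∈ E, ⌊k * w e / L⌋₊ : ℝ) ≤ ∑ e ∈ E, k * w e / L :=
          Finset.sum_le_sum fun e he => Nat.floor_le (by have := hw e he; positivity)
      _ = k := by rw [← Finset.sum_div, ← Finset.mul_sum, mul_div_assoc, div_self hL.ne', mul_one]
  exact_mod_cast this

theorem exists_sum_eq_mul_bottleneck_le (hw : ∀ e ∈ E, 0 ≤ w e) (k : ℕ) :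
    ∃ n : ι → ℕ, ∑ e ∈ E, n e = k ∧ k * bottleneck E hE w n ≤ ∑ e ∈ E, w e := by
  classical
  set L := ∑ e ∈ E, w e
  obtain ⟨n, hbn, hn⟩ := exists_le_sum_eq hE (sum_floor_mul_div_le hw k)
  refine ⟨n, hn, ?_⟩
  obtain ⟨e, he, hmax⟩ := Finset.exists_mem_eq_sup' hE fun e => w e / ((n e : ℝ) + 1)
  rw [bottleneck, hmax, ← mul_div_assoc, div_le_iff₀ (by positivity)]
  rcases (Finset.sum_nonneg hw).eq_or_lt with hL | hL
  · rw [(Finset.sum_eq_zero_iff_of_nonneg hw).mp hL.symm e he, mul_zero]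
    exact mul_nonneg hL.le (by positivity)
  have hfloor : k * w e / L < ⌊k * w e / L⌋₊ + 1 := Nat.lt_floor_add_one _
  have hle : (⌊k * w e / L⌋₊ : ℝ) ≤ n e := by exact_mod_cast hbn e
  rw [div_lt_iff₀ hL] at hfloor
  calc k * w e ≤ (⌊k * w e / L⌋₊ + 1) * L := hfloor.le
    _ ≤ (n e + 1) * L := by gcongr
    _ = L * (n e + 1) := mul_comm _ _

variable (hw : ∀ e ∈ E, 0 ≤ w e)
include hw

theorem div_le_optBottleneck (k : ℕ) :
    (∑ e ∈ E, w e) / (k + E.card) ≤ optBottleneck E hE w k := by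
  obtain ⟨n, hn, -⟩ := exists_sum_eq_mul_bottleneck_le hE hw k
  refine le_csInf ⟨_, n, hn, rfl⟩ ?_
  rintro c ⟨n, hn, rfl⟩
  exact sum_div_le_bottleneck hE hn

theorem natCast_mul_optBottleneck_le (k : ℕ) :
    k * optBottleneck E hE w k ≤ ∑ e ∈ E, w e := by
  obtain ⟨n, hn, hkn⟩ := exists_sum_eq_mul_bottleneck_le hE hw k
  have hbdd : BddBelow {c : ℝ | ∃ n : ι → ℕ, (∑ e ∈ E, n e) = k ∧ c = bottleneck E hE w n} :=
    ⟨_, by rintro c ⟨n, hn, rfl⟩; exact sum_div_le_bottleneck hE hn⟩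
  exact (mul_le_mul_of_nonneg_left (csInf_le hbdd ⟨n, hn, rfl⟩) k.cast_nonneg).trans hkn

theorem tendsto_natCast_mul_optBottleneck :
    Tendsto (fun k : ℕ => k * optBottleneck E hE w k) atTop (𝓝 (∑ e ∈ E, w e)) := by
  set L := ∑ e ∈ E, w e
  have hlower : Tendsto (fun k : ℕ => (k : ℝ) / (k + E.card) * L) atTop (𝓝 L) := by
    simpa using (tendsto_natCast_div_add_atTop (E.card : ℝ)).mul_const L
  refine tendsto_of_tendsto_of_tendsto_of_le_of_le hlower tendsto_const_nhds (fun k => ?_)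
    (natCast_mul_optBottleneck_le hE hw)
  rw [div_mul_eq_mul_div, mul_div_assoc]
  exact mul_le_mul_of_nonneg_left (div_le_optBottleneck hE hw k) k.cast_nonneg

end Beading

theorem elen_nonneg (Y : Finset Pt) (e : Sym2 Y) : 0 ≤ elen Y e := by
  induction e using Sym2.ind with
  | _ a b => exact dist_nonneg (x := (a : Pt)) (y := b)

theorem beaded_mst_bottleneck_asymptotics_general (X : Finset Pt)
    (E : Finset (Sym2 ↥X))
    (hEne : E.Nonempty) (ℓ : ℕ → ℝ)
    (hℓ : ∀ k, ℓ k = sInf {c : ℝ | ∃ nn : Sym2 ↥X → ℕ,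
      (∑ e ∈ E, nn e) = k ∧ c = E.sup' hEne (fun e => elen X e / ((nn e : ℝ) + 1))}) :
    Tendsto (fun k : ℕ => (k : ℝ) * ℓ k) atTop (nhds (∑ e ∈ E, elen X e)) := by
  obtain rfl : ℓ = Beading.optBottleneck E hEne (elen X) := funext hℓ
  exact Beading.tendsto_natCast_mul_optBottleneck hEne fun e _ => elen_nonneg X e

/-- k times the optimal bottleneck of beading the MST of X with k beads
converges to the total MST length as k → ∞. -/
theorem beaded_mst_bottleneck_asymptotics (X : Finset Pt)
    (T : SimpleGraph ↥X) (hT : T.IsTree)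
    (hmst : ∀ G : SimpleGraph ↥X, G.IsTree → totalLen X T ≤ totalLen X G)
    (E : Finset (Sym2 ↥X)) (hE : E = (Set.toFinite T.edgeSet).toFinset)
    (hEne : E.Nonempty) (ℓ : ℕ → ℝ)
    (hℓ : ∀ k, ℓ k = sInf {c : ℝ | ∃ nn : Sym2 ↥X → ℕ,
      (∑ e ∈ E, nn e) = k ∧ c = E.sup' hEne (fun e => elen X e / ((nn e : ℝ) + 1))}) :
    Tendsto (fun k : ℕ => (k : ℝ) * ℓ k) atTop (nhds (∑ e ∈ E, elen X e)) :=
  beaded_mst_bottleneck_asymptotics_general X E hEne ℓ hℓ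
end
end
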